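/- Let Ā₁ = ℚ[x, y, z], let Ā₂ = ℚ[a, b, c, d]/(d² + c²(2b + a²)(a² − 4c)), and let B = ℚ[x, y]. Let π₁ : Ā₁ → B be the ℚ-algebra homomorphism with x ↦ x, y ↦ y, z ↦ 0, and let π₂ : Ā₂ → B be the ℚ-algebra homomorphism induced by a ↦ x, b ↦ 2y − x², c ↦ y, d ↦ −y(x² − 4y) (which kills the defining relation). Then the ℚ-algebra homomorphism from ℚ[K₁, K₂, G₂, G₃, Q] to the fiber product Ā₁ ×_B Ā₂ (taken along π₁ and π₂) determined by K₁ ↦ (x, ā), K₂ ↦ (2y − x², b̄), G₂ ↦ (y, c̄), G₃ ↦ (z, 0), Q ↦ (−y(x² − 4y), d̄) is surjective with kernel the ideal J generated by the three polynomials Q² + G₂²(2K₂ + K₁²)(K₁² − 4G₂), G₃·(−K₂ + 2G₂ − K₁²), and G₃·(Q + G₂(K₁² − 4G₂)); hence Ā₁ ×_B Ā₂ ≅ ℚ[K₁, K₂, G₂, G₃, Q]/J. -/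

import Mathlib

open MvPolynomial

namespace Stmt11

/-- `Ā₁ = ℚ[x, y, z]` with `x = X 0`, `y = X 1`, `z = X 2`. -/
abbrev A1 : Type := MvPolynomial (Fin 3) ℚ

/-- The defining relation `d² + c²(2b + a²)(a² − 4c)` of `Ā₂`,
with `a = X 0`, `b = X 1`, `c = X 2`, `d = X 3`. -/
noncomputable def rel : MvPolynomial (Fin 4) ℚ :=
  X 3 ^ 2 + X 2 ^ 2 * (2 * X 1 + X 0 ^ 2) * (X 0 ^ 2 - 4 * X 2)

/-- `Ā₂ = ℚ[a, b, c, d]/(d² + c²(2b + a²)(a² − 4c))`. -/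
abbrev A2 : Type := MvPolynomial (Fin 4) ℚ ⧸ Ideal.span {rel}

noncomputable def mk2 : MvPolynomial (Fin 4) ℚ →ₐ[ℚ] A2 :=
  Ideal.Quotient.mkₐ ℚ (Ideal.span {rel})

/-- `B = ℚ[x, y]` with `x = X 0`, `y = X 1`. -/
abbrev B : Type := MvPolynomial (Fin 2) ℚ

/-- `π₁ : Ā₁ → B`, `x ↦ x`, `y ↦ y`, `z ↦ 0`. -/
noncomputable def π₁ : A1 →ₐ[ℚ] B := aeval ![X 0, X 1, 0]

lemma aux : ∀ x ∈ Ideal.span {rel},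
    (aeval ![X 0, 2 * X 1 - X 0 ^ 2, X 1, -X 1 * (X 0 ^ 2 - 4 * X 1)] :
      MvPolynomial (Fin 4) ℚ →ₐ[ℚ] B) x = 0 := by
  intro x hx
  obtain ⟨c, rfl⟩ := Ideal.mem_span_singleton'.mp hx
  rw [map_mul]
  have h : (aeval ![X 0, 2 * X 1 - X 0 ^ 2, X 1, -X 1 * (X 0 ^ 2 - 4 * X 1)] :
      MvPolynomial (Fin 4) ℚ →ₐ[ℚ] B) rel = 0 := by
    simp only [rel, map_add, map_sub, map_mul, map_pow, map_ofNat, map_neg, aeval_X]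
    simp only [Matrix.cons_val_zero, Matrix.cons_val_one, Matrix.cons_val_two,
      Matrix.cons_val_three, Matrix.head_cons, Matrix.tail_cons]
    ring
  rw [h, mul_zero]

/-- `π₂ : Ā₂ → B`, induced by `a ↦ x`, `b ↦ 2y − x²`, `c ↦ y`, `d ↦ −y(x² − 4y)`
(which kills the defining relation). -/
noncomputable def π₂ : A2 →ₐ[ℚ] B :=
  Ideal.Quotient.liftₐ (Ideal.span {rel})
    (aeval ![X 0, 2 * X 1 - X 0 ^ 2, X 1, -X 1 * (X 0 ^ 2 - 4 * X 1)]) aux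

/-- The fiber product `Ā₁ ×_B Ā₂` along `π₁` and `π₂`, as a subring of `Ā₁ × Ā₂`. -/
noncomputable def F : Subring (A1 × A2) :=
  (π₁.toRingHom.comp (RingHom.fst A1 A2)).eqLocus (π₂.toRingHom.comp (RingHom.snd A1 A2))

/-- The homomorphism `ℚ[K₁, K₂, G₂, G₃, Q] → Ā₁ × Ā₂` determined by `K₁ ↦ (x, ā)`,
`K₂ ↦ (2y − x², b̄)`, `G₂ ↦ (y, c̄)`, `G₃ ↦ (z, 0)`, `Q ↦ (−y(x² − 4y), d̄)`
(with `K₁ = X 0`, `K₂ = X 1`, `G₂ = X 2`, `G₃ = X 3`, `Q = X 4`). -/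
noncomputable def Φ : MvPolynomial (Fin 5) ℚ →ₐ[ℚ] A1 × A2 :=
  aeval ![(X 0, mk2 (X 0)), (2 * X 1 - X 0 ^ 2, mk2 (X 1)), (X 1, mk2 (X 2)),
    (X 2, 0), (-X 1 * (X 0 ^ 2 - 4 * X 1), mk2 (X 3))]

/-- The ideal `J` generated by `Q² + G₂²(2K₂ + K₁²)(K₁² − 4G₂)`,
`G₃(−K₂ + 2G₂ − K₁²)` and `G₃(Q + G₂(K₁² − 4G₂))`. -/
noncomputable def J : Ideal (MvPolynomial (Fin 5) ℚ) :=
  Ideal.span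
    {X 4 ^ 2 + X 2 ^ 2 * (2 * X 1 + X 0 ^ 2) * (X 0 ^ 2 - 4 * X 2),
     X 3 * (-X 1 + 2 * X 2 - X 0 ^ 2),
     X 3 * (X 4 + X 2 * (X 0 ^ 2 - 4 * X 2))}

/-!
A pair `(p, q)` in the fiber product differs from the image of a lift of `q` (through `K₁, K₂, G₂, Q`)
by an element of `ker π₁ × 0 = (z) × 0`, and `(z r, 0)` is the image of `G₃ · r(K₁, G₂, G₃)`;
so `Φ` is onto the fiber product. For the kernel, write `f = f|_{G₃ = 0} + G₃ h`. The first summand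
is killed in `Ā₂`, hence is a multiple of the first generator of `J`. Then `Φ₁ h = 0` since `Ā₁` is a
domain, and modulo the other two generators `G₃ K₂` and `G₃ Q` are polynomials in `K₁, G₂, G₃`, on
which `Φ₁` is injective; hence `G₃ h ∈ J`.
-/

theorem range_eq_eqLocus_of_surjective_snd {R A B C : Type*} [Ring R] [Ring A] [Ring B]
    [Ring C] (f : A →+* C) (g : B →+* C) (φ : R →+* A × B)
    (hcomm : f.comp ((RingHom.fst A B).comp φ) = g.comp ((RingHom.snd A B).comp φ))
    (hsnd : Function.Surjective ((RingHom.snd A B).comp φ))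
    (hker : ∀ a ∈ RingHom.ker f, ((a, 0) : A × B) ∈ φ.range) :
    φ.range = (f.comp (RingHom.fst A B)).eqLocus (g.comp (RingHom.snd A B)) := by
  apply le_antisymm
  · rintro _ ⟨r, rfl⟩
    exact RingHom.congr_fun hcomm r
  · rintro ⟨a, b⟩ hab
    obtain ⟨r, hr⟩ := hsnd b
    have hdiff : a - (φ r).1 ∈ RingHom.ker f := by
      have hab : f a = g b := hab
      rw [RingHom.mem_ker, map_sub, hab, ← hr]
      exact sub_eq_zero.mpr (RingHom.congr_fun hcomm r).symm
    have hsum : (a - (φ r).1, 0) + φ r = (a, b) := Prod.ext (sub_add_cancel a _) (by simp [← hr])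
    exact hsum ▸ add_mem (hker _ hdiff) (φ.mem_range_self r)

theorem sub_mem_of_forall_X_sub_mem {σ R S : Type*} [CommSemiring R] [CommRing S]
    [Algebra R S] {I : Ideal S} {f g : MvPolynomial σ R →ₐ[R] S}
    (h : ∀ i, f (X i) - g (X i) ∈ I) (p : MvPolynomial σ R) : f p - g p ∈ I := by
  have : (Ideal.Quotient.mkₐ R I).comp f = (Ideal.Quotient.mkₐ R I).comp g :=
    algHom_ext fun i => Ideal.Quotient.eq.mpr (h i)
  exact Ideal.Quotient.eq.mp (AlgHom.congr_fun this p)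

noncomputable def Φ₁ : MvPolynomial (Fin 5) ℚ →ₐ[ℚ] A1 := (AlgHom.fst ℚ A1 A2).comp Φ

/-- `ℚ[a, b, c, d] → ℚ[K₁, K₂, G₂, G₃, Q]`, `a, b, c, d ↦ K₁, K₂, G₂, Q`. -/
noncomputable def ι : MvPolynomial (Fin 4) ℚ →ₐ[ℚ] MvPolynomial (Fin 5) ℚ :=
  aeval ![X 0, X 1, X 2, X 4]

/-- `G₃ ↦ 0`, a retraction of `ι`. -/
noncomputable def τ : MvPolynomial (Fin 5) ℚ →ₐ[ℚ] MvPolynomial (Fin 4) ℚ :=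
  aeval ![X 0, X 1, X 2, 0, X 3]

/-- `x, y, z ↦ K₁, G₂, G₃`, a section of `Φ₁`. -/
noncomputable def ρ : A1 →ₐ[ℚ] MvPolynomial (Fin 5) ℚ := aeval ![X 0, X 2, X 3]

/-- Generated by the relations `K₂ = 2G₂ − K₁²` and `Q = −G₂(K₁² − 4G₂)` that hold in `Ā₁`. -/
noncomputable def elimIdeal : Ideal (MvPolynomial (Fin 5) ℚ) :=
  Ideal.span {-X 1 + 2 * X 2 - X 0 ^ 2, X 4 + X 2 * (X 0 ^ 2 - 4 * X 2)}

lemma snd_Φ (p : MvPolynomial (Fin 5) ℚ) : (Φ p).2 = mk2 (τ p) := by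
  have : (AlgHom.snd ℚ A1 A2).comp Φ = mk2.comp τ := by
    apply algHom_ext
    intro i
    fin_cases i <;> simp [Φ, τ]
  exact AlgHom.congr_fun this p

lemma Φ_X_three : Φ (X 3) = ((X 2 : A1), (0 : A2)) := by simp [Φ]

lemma Φ₁_comp_ρ : Φ₁.comp ρ = AlgHom.id ℚ A1 := by
  apply algHom_ext
  intro i
  fin_cases i <;> simp [Φ₁, ρ, Φ]

lemma π₂_mk2 (p : MvPolynomial (Fin 4) ℚ) :
    π₂ (mk2 p) = aeval ![X 0, 2 * X 1 - X 0 ^ 2, X 1, -X 1 * (X 0 ^ 2 - 4 * X 1)] p := rfl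

lemma π₁_fst_Φ (p : MvPolynomial (Fin 5) ℚ) : π₁ (Φ p).1 = π₂ (Φ p).2 := by
  have : π₁.comp Φ₁ = π₂.comp ((AlgHom.snd ℚ A1 A2).comp Φ) := by
    apply algHom_ext
    intro i
    fin_cases i <;> simp [Φ₁, Φ, π₁, π₂_mk2, map_ofNat]
  exact AlgHom.congr_fun this p

lemma mem_span_X_two_of_π₁_eq_zero {p : A1} (hp : π₁ p = 0) : p ∈ Ideal.span {(X 2 : A1)} := by
  have := sub_mem_of_forall_X_sub_mem (I := Ideal.span {(X 2 : A1)})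
    (f := AlgHom.id ℚ A1) (g := (aeval ![X 0, X 1]).comp π₁) (fun i => by
      fin_cases i <;> simp [π₁]) p
  simpa [hp] using this

lemma ι_rel_mem_J : ι rel ∈ J := by
  apply Ideal.subset_span
  left
  simp [ι, rel, map_ofNat]

lemma J_le_ker : J ≤ RingHom.ker Φ := by
  have hrel : mk2 rel = 0 := Ideal.Quotient.eq_zero_iff_mem.mpr (Ideal.mem_span_singleton_self _)
  rw [J, Ideal.span_le]
  rintro p (rfl | rfl | rfl) <;> refine Prod.ext ?_ ?_ <;> try rw [Prod.snd_zero, snd_Φ]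
  · simp [Φ, map_ofNat]
    ring
  · simpa [τ, map_ofNat, rel] using hrel
  · simp [Φ, map_ofNat]
  · simp [τ]
  · simp [Φ, map_ofNat]
  · simp [τ]

lemma X_three_mul_mem_J {h : MvPolynomial (Fin 5) ℚ} (hh : h ∈ elimIdeal) : X 3 * h ∈ J := by
  obtain ⟨c, d, rfl⟩ := Ideal.mem_span_pair.mp hh
  have h₂ : X 3 * (-X 1 + 2 * X 2 - X 0 ^ 2) ∈ J := Ideal.subset_span (by simp)
  have h₃ : X 3 * (X 4 + X 2 * (X 0 ^ 2 - 4 * X 2)) ∈ J := Ideal.subset_span (by simp)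
  rw [mul_add, mul_left_comm, mul_left_comm (X 3)]
  exact add_mem (J.mul_mem_left c h₂) (J.mul_mem_left d h₃)

lemma mem_elimIdeal_of_Φ₁_eq_zero {h : MvPolynomial (Fin 5) ℚ} (hh : Φ₁ h = 0) :
    h ∈ elimIdeal := by
  have hK₂ : X 1 - (2 * X 2 - X 0 ^ 2) ∈ elimIdeal := by
    rw [show (X 1 - (2 * X 2 - X 0 ^ 2) : MvPolynomial (Fin 5) ℚ) =
      -(-X 1 + 2 * X 2 - X 0 ^ 2) by ring]
    exact neg_mem (Ideal.subset_span (by simp))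
  have hQ : X 4 + X 2 * (X 0 ^ 2 - 4 * X 2) ∈ elimIdeal := Ideal.subset_span (by simp)
  have := sub_mem_of_forall_X_sub_mem (I := elimIdeal) (f := AlgHom.id ℚ _) (g := ρ.comp Φ₁)
    (fun i => by fin_cases i <;> simp [Φ₁, Φ, ρ, map_ofNat, hK₂, hQ]) h
  simpa [hh] using this

lemma ker_le_J : RingHom.ker Φ ≤ J := by
  intro f (hf : Φ f = 0)
  obtain ⟨h, hh⟩ : ∃ h, f = ι (τ f) + X 3 * h := by
    have := sub_mem_of_forall_X_sub_mem (I := Ideal.span {X 3}) (f := AlgHom.id ℚ _)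
      (g := ι.comp τ) (fun i => by fin_cases i <;> simp [ι, τ]) f
    obtain ⟨h, hh⟩ := Ideal.mem_span_singleton'.mp this
    exact ⟨h, by rw [AlgHom.id_apply, AlgHom.comp_apply] at hh; linear_combination -hh⟩
  have hι : ι (τ f) ∈ J := by
    have hτ : mk2 (τ f) = 0 := snd_Φ f ▸ congrArg Prod.snd hf
    obtain ⟨u, hu⟩ := Ideal.mem_span_singleton.mp (Ideal.Quotient.eq_zero_iff_mem.mp hτ)
    rw [hu, map_mul]
    exact J.mul_mem_right _ ι_rel_mem_J
  have hh₁ : Φ₁ h = 0 := by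
    have h₁ := congrArg Prod.fst hf
    rw [hh, map_add, map_mul, Φ_X_three, J_le_ker hι] at h₁
    simpa [Φ₁] using h₁
  rw [hh]
  exact add_mem hι (X_three_mul_mem_J (mem_elimIdeal_of_Φ₁_eq_zero hh₁))

lemma surjective_snd_Φ : Function.Surjective ((RingHom.snd A1 A2).comp Φ.toRingHom) := by
  intro q
  obtain ⟨q, rfl⟩ := Ideal.Quotient.mkₐ_surjective ℚ _ q
  refine ⟨ι q, ?_⟩
  have : τ.comp ι = AlgHom.id ℚ _ := by
    apply algHom_ext
    intro i
    fin_cases i <;> simp [ι, τ]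
  simp [snd_Φ, ← AlgHom.comp_apply τ ι, this, mk2]

lemma mem_range_Φ_of_π₁_eq_zero {a : A1} (ha : π₁ a = 0) :
    ((a, 0) : A1 × A2) ∈ Φ.toRingHom.range := by
  obtain ⟨r, rfl⟩ := Ideal.mem_span_singleton'.mp (mem_span_X_two_of_π₁_eq_zero ha)
  refine ⟨X 3 * ρ r, ?_⟩
  have hr : (Φ (ρ r)).1 = r := AlgHom.congr_fun Φ₁_comp_ρ r
  ext <;> simp [Φ_X_three, hr, mul_comm]

/-- `Φ` is surjective onto the fiber product `Ā₁ ×_B Ā₂` with kernel `J`; hence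
`Ā₁ ×_B Ā₂ ≅ ℚ[K₁, K₂, G₂, G₃, Q]/J`. -/
theorem stmt11 :
    Φ.toRingHom.range = F ∧
    RingHom.ker Φ = J ∧
    Nonempty (F ≃+* (MvPolynomial (Fin 5) ℚ ⧸ J)) := by
  have hrange : Φ.toRingHom.range = F :=
    range_eq_eqLocus_of_surjective_snd _ _ _ (RingHom.ext π₁_fst_Φ) surjective_snd_Φ
      fun _ ha => mem_range_Φ_of_π₁_eq_zero ha
  have hker : RingHom.ker Φ = J := le_antisymm ker_le_J J_le_ker
  exact ⟨hrange, hker, ⟨(RingEquiv.subringCongr hrange.symm).trans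
    ((RingHom.quotientKerEquivRange Φ.toRingHom).symm.trans (Ideal.quotEquivOfEq hker))⟩⟩

end Stmt11
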